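/- Define x : ℕ → ℝ by x 0 = 1 − √3/2 and x (i+1) = 2·(x i)² / (1 − √3·(x i) + √(1 − 2√3·(x i) − (x i)²)); define d i = √((x (i+1))²/4 + (x i + (√3/2)·x (i+1))²), θ i = 2·arcsin(d i / 2), and a i = (x i · x (i+1))/4 − (θ i − sin (θ i))/2. Then 3.7507·10⁻¹¹ < a 2 < 3.7508·10⁻¹¹. (Thus Hansen's claim that the first region he removed has area 4·10⁻¹¹ is approximately correct.) -/

import Mathlib

/-!
The stable formula for `xseq (i + 1)` is the smaller root `y` of
`y ^ 2 - (1 - √3 x) y + x ^ 2 = 0`, `x = xseq i`. This quadratic is the law of cosines for the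
150° angle, so the chord satisfies `dseq i ^ 2 = xseq (i + 1)`. Since the quadratic is monotone in
`x` and `√3`, rational enclosures of `xseq 0, …, xseq 3` follow from sign checks of the quadratic
at rational points, with no square root evaluated.

For the angle, `sin t ≤ t ≤ tan t` at `t = arcsin (d / 2)` pins `θ` between `d` and
`d / √(1 - d ^ 2 / 4)`, and `θ - sin θ` lies within `θ ^ 5 / 120 < 10⁻¹⁸` of `θ ^ 3 / 6`. Seven
significant digits throughout then confine `aseq 2` to an interval of width `3·10⁻¹⁶` around
`3.750723·10⁻¹¹`.
-/

noncomputable section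

/-- Hansen's recursively defined sequence of distances, in the numerically stable form. -/
def xseq : ℕ → ℝ
  | 0 => 1 - Real.sqrt 3 / 2
  | i + 1 => 2 * (xseq i) ^ 2 /
      (1 - Real.sqrt 3 * xseq i + Real.sqrt (1 - 2 * Real.sqrt 3 * xseq i - (xseq i) ^ 2))

/-- The chord length of the arc in Hansen's sliver region. -/
def dseq (i : ℕ) : ℝ :=
  Real.sqrt ((xseq (i + 1)) ^ 2 / 4 + (xseq i + Real.sqrt 3 / 2 * xseq (i + 1)) ^ 2)

/-- The angle subtended by the chord at the center of the unit circle. -/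
def θseq (i : ℕ) : ℝ := 2 * Real.arcsin (dseq i / 2)

/-- The area of the region bounded by two line segments of lengths `x i` and `x (i+1)`
meeting at an interior angle of 150°, and an arc of a circle of radius 1. -/
def aseq (i : ℕ) : ℝ := xseq i * xseq (i + 1) / 4 - (θseq i - Real.sin (θseq i)) / 2

open Real Set

namespace Real

theorem cos_le_one_sub_sq_div_two_add_pow_four_div {x : ℝ} (hx : 0 ≤ x) :
    cos x ≤ 1 - x ^ 2 / 2 + x ^ 4 / 24 := by
  let f (t : ℝ) : ℝ := 1 - t ^ 2 / 2 + t ^ 4 / 24 - cos t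
  have hderiv (t : ℝ) : deriv f t = sin t - (t - t ^ 3 / 6) := by
    simp (disch := fun_prop) [f]
    ring
  have hmono : MonotoneOn f (Ici 0) := by
    apply monotoneOn_of_deriv_nonneg (convex_Ici 0) (by fun_prop) (by fun_prop)
    intro t ht
    rw [interior_Ici] at ht
    rw [hderiv]
    linarith [sin_ge_sub_cube (le_of_lt ht)]
  have := hmono self_mem_Ici hx hx
  simp only [f] at this
  norm_num at this
  linarith

theorem sin_le_sub_cube_add_pow_five {x : ℝ} (hx : 0 ≤ x) :
    sin x ≤ x - x ^ 3 / 6 + x ^ 5 / 120 := by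
  let f (t : ℝ) : ℝ := t - t ^ 3 / 6 + t ^ 5 / 120 - sin t
  have hderiv (t : ℝ) : deriv f t = 1 - t ^ 2 / 2 + t ^ 4 / 24 - cos t := by
    simp (disch := fun_prop) [f]
    ring
  have hmono : MonotoneOn f (Ici 0) := by
    apply monotoneOn_of_deriv_nonneg (convex_Ici 0) (by fun_prop) (by fun_prop)
    intro t ht
    rw [interior_Ici] at ht
    rw [hderiv]
    linarith [cos_le_one_sub_sq_div_two_add_pow_four_div (le_of_lt ht)]
  have := hmono self_mem_Ici hx hx
  simp only [f] at this
  norm_num at this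
  linarith

theorem self_le_arcsin {x : ℝ} (hx₀ : 0 ≤ x) (hx₁ : x ≤ 1) : x ≤ arcsin x :=
  calc x = sin (arcsin x) := (sin_arcsin (by linarith) hx₁).symm
    _ ≤ arcsin x := sin_le (arcsin_nonneg.2 hx₀)

theorem arcsin_le_div_sqrt {x : ℝ} (hx₀ : 0 ≤ x) (hx₁ : x < 1) :
    arcsin x ≤ x / √(1 - x ^ 2) :=
  tan_arcsin x ▸ le_tan (arcsin_nonneg.2 hx₀) (arcsin_lt_pi_div_two.2 hx₁)

theorem arcsin_sq_mul_le {x : ℝ} (hx₀ : 0 ≤ x) (hx₁ : x < 1) :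
    arcsin x ^ 2 * (1 - x ^ 2) ≤ x ^ 2 := by
  have h₁ : 0 < 1 - x ^ 2 := by nlinarith
  have h := (le_div_iff₀ (sqrt_pos.2 h₁)).1 (arcsin_le_div_sqrt hx₀ hx₁)
  have := pow_le_pow_left₀ (mul_nonneg (arcsin_nonneg.2 hx₀) (sqrt_nonneg _)) h 2
  rwa [mul_pow, sq_sqrt h₁.le] at this

end Real

theorem quadratic_of_eq_two_mul_div_add_sqrt {b c y : ℝ} (hb : 0 < b) (hD : 0 ≤ b ^ 2 - 4 * c)
    (hy : y = 2 * c / (b + √(b ^ 2 - 4 * c))) : y ^ 2 - b * y + c = 0 ∧ 2 * y ≤ b := by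
  have hr := sq_sqrt hD
  have hr₀ := sqrt_nonneg (b ^ 2 - 4 * c)
  replace hy : y = (b - √(b ^ 2 - 4 * c)) / 2 := by
    rw [hy, div_eq_div_iff (by positivity) two_ne_zero]
    linear_combination hr
  rw [hy]
  constructor
  · linear_combination hr / 4
  · linarith

theorem mem_Icc_of_sq_sub_mul_add_eq_zero {b c y l u : ℝ} (hy : y ^ 2 - b * y + c = 0)
    (hyb : 2 * y ≤ b) (hlb : 2 * l ≤ b) (hl : 0 ≤ l ^ 2 - b * l + c) (hu : u ^ 2 - b * u + c ≤ 0) :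
    y ∈ Icc l u := by
  constructor <;> nlinarith

theorem sqrt_three_mem_Icc : √3 ∈ Icc 1.7320508 1.73205081 :=
  ⟨le_sqrt_of_sq_le (by norm_num), (sqrt_le_left (by norm_num)).2 (by norm_num)⟩

theorem xseq_succ_quadratic_of_mem {i : ℕ} (hx : xseq i ∈ Icc 0 (1 - √3 / 2)) :
    xseq (i + 1) ^ 2 - (1 - √3 * xseq i) * xseq (i + 1) + xseq i ^ 2 = 0 ∧
      2 * xseq (i + 1) ≤ 1 - √3 * xseq i := by
  obtain ⟨hx₀, hx₁⟩ := hx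
  have h3 := sq_sqrt (show (0 : ℝ) ≤ 3 by norm_num)
  have hs := sqrt_three_mem_Icc
  have hb : 0 < 1 - √3 * xseq i := by nlinarith [hs.2]
  have hD' : 1 - 2 * √3 * xseq i - xseq i ^ 2 = (1 - √3 * xseq i) ^ 2 - 4 * xseq i ^ 2 := by
    linear_combination (-xseq i ^ 2) * h3
  have hD : 0 ≤ (1 - √3 * xseq i) ^ 2 - 4 * xseq i ^ 2 := by
    nlinarith [mul_le_mul_of_nonneg_left hx₁ (sqrt_nonneg 3), pow_le_pow_left₀ hx₀ hx₁ 2, hs.2]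
  exact quadratic_of_eq_two_mul_div_add_sqrt hb hD (by rw [xseq, hD'])

theorem xseq_mem_Icc (i : ℕ) : xseq i ∈ Icc 0 (1 - √3 / 2) := by
  have h3 := sq_sqrt (show (0 : ℝ) ≤ 3 by norm_num)
  have hs := sqrt_three_mem_Icc
  induction i with
  | zero => exact ⟨by rw [xseq]; linarith [hs.2], by rw [xseq]⟩
  | succ i ih =>
    obtain ⟨hroot, hle⟩ := xseq_succ_quadratic_of_mem ih
    have := mem_Icc_of_sq_sub_mul_add_eq_zero hroot hle (l := 0) (u := xseq i)
      (by nlinarith [ih.1, ih.2, hs.2]) (by nlinarith) (by nlinarith [ih.1, ih.2, hs.2])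
    exact ⟨this.1, this.2.trans ih.2⟩

theorem xseq_succ_quadratic (i : ℕ) :
    xseq (i + 1) ^ 2 - (1 - √3 * xseq i) * xseq (i + 1) + xseq i ^ 2 = 0 ∧
      2 * xseq (i + 1) ≤ 1 - √3 * xseq i :=
  xseq_succ_quadratic_of_mem (xseq_mem_Icc i)

theorem dseq_sq (i : ℕ) : dseq i ^ 2 = xseq (i + 1) := by
  rw [dseq, sq_sqrt (by positivity)]
  linear_combination (xseq_succ_quadratic i).1 +
    xseq (i + 1) ^ 2 / 4 * sq_sqrt (show (0 : ℝ) ≤ 3 by norm_num)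

theorem xseq_succ_mem_Icc {i : ℕ} {s₁ s₂ x₁ x₂ l u : ℝ} (hs : √3 ∈ Icc s₁ s₂)
    (hx : xseq i ∈ Icc x₁ x₂) (hx₁ : 0 ≤ x₁) (hl : 0 ≤ l) (hlb : 2 * l ≤ 1 - s₂ * x₂)
    (hlq : 0 ≤ l ^ 2 - (1 - s₁ * x₁) * l + x₁ ^ 2) (huq : u ^ 2 - (1 - s₂ * x₂) * u + x₂ ^ 2 ≤ 0) :
    xseq (i + 1) ∈ Icc l u := by
  obtain ⟨hroot, hle⟩ := xseq_succ_quadratic i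
  obtain ⟨hs₁, hs₂⟩ := hs
  obtain ⟨hx₁', hx₂'⟩ := hx
  have hx₀ := (xseq_mem_Icc i).1
  have hsx₁ : s₁ * x₁ ≤ √3 * xseq i := mul_le_mul hs₁ hx₁' hx₁ (sqrt_nonneg 3)
  have hsx₂ : √3 * xseq i ≤ s₂ * x₂ := mul_le_mul hs₂ hx₂' hx₀ ((sqrt_nonneg 3).trans hs₂)
  have hxx₁ : x₁ ^ 2 ≤ xseq i ^ 2 := pow_le_pow_left₀ hx₁ hx₁' 2
  have hxx₂ : xseq i ^ 2 ≤ x₂ ^ 2 := pow_le_pow_left₀ hx₀ hx₂' 2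
  have hu : 0 ≤ u := by nlinarith
  apply mem_Icc_of_sq_sub_mul_add_eq_zero hroot hle
  · linarith
  · nlinarith
  · nlinarith

theorem xseq_succ_lt_four (i : ℕ) : xseq (i + 1) < 4 := by
  linarith [(xseq_mem_Icc (i + 1)).2, sqrt_nonneg 3]

theorem dseq_div_two_mem_Ico (i : ℕ) : dseq i / 2 ∈ Ico 0 1 := by
  have hd₀ : 0 ≤ dseq i := sqrt_nonneg _
  have hd := dseq_sq i
  exact ⟨by positivity, by nlinarith [xseq_succ_lt_four i]⟩

theorem dseq_le_θseq (i : ℕ) : dseq i ≤ θseq i := by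
  obtain ⟨hs₀, hs₁⟩ := dseq_div_two_mem_Ico i
  rw [θseq]
  linarith [self_le_arcsin hs₀ hs₁.le]

theorem θseq_sq_mul_le (i : ℕ) : θseq i ^ 2 * (4 - xseq (i + 1)) ≤ 4 * xseq (i + 1) := by
  obtain ⟨hs₀, hs₁⟩ := dseq_div_two_mem_Ico i
  have := arcsin_sq_mul_le hs₀ hs₁
  rw [θseq, ← dseq_sq]
  nlinarith

theorem θseq_mem_Icc {i : ℕ} {q₁ q₂ t₁ t₂ : ℝ} (hq : xseq (i + 1) ∈ Icc q₁ q₂)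
    (ht₁ : t₁ ^ 2 ≤ q₁) (ht₂ : 0 ≤ t₂) (ht₂q : 4 * q₂ ≤ t₂ ^ 2 * (4 - q₂)) :
    θseq i ∈ Icc t₁ t₂ := by
  have hd := dseq_sq i
  have hθt₂ : θseq i ^ 2 ≤ t₂ ^ 2 := by
    refine le_of_mul_le_mul_right ?_ (sub_pos.2 (xseq_succ_lt_four i))
    nlinarith [hq.2, θseq_sq_mul_le i]
  have ht₁d : t₁ ≤ dseq i :=
    (le_abs_self t₁).trans (abs_le_of_sq_le_sq (by linarith [hq.1]) (sqrt_nonneg _))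
  exact ⟨ht₁d.trans (dseq_le_θseq i), (le_abs_self _).trans (abs_le_of_sq_le_sq hθt₂ ht₂)⟩

theorem aseq_mem_Icc {i : ℕ} {p₁ p₂ q₁ q₂ t₁ t₂ : ℝ} (hp : xseq i ∈ Icc p₁ p₂)
    (hq : xseq (i + 1) ∈ Icc q₁ q₂) (ht : θseq i ∈ Icc t₁ t₂) (hp₁ : 0 ≤ p₁) (hq₁ : 0 ≤ q₁)
    (ht₁ : 0 ≤ t₁) :
    aseq i ∈ Icc (p₁ * q₁ / 4 - t₂ ^ 3 / 12) (p₂ * q₂ / 4 - t₁ ^ 3 / 12 + t₂ ^ 5 / 240) := by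
  have hθ₀ : 0 ≤ θseq i := ht₁.trans ht.1
  have hpq₁ : p₁ * q₁ ≤ xseq i * xseq (i + 1) := mul_le_mul hp.1 hq.1 hq₁ (hp₁.trans hp.1)
  have hpq₂ : xseq i * xseq (i + 1) ≤ p₂ * q₂ :=
    mul_le_mul hp.2 hq.2 (hq₁.trans hq.1) (hp₁.trans (hp.1.trans hp.2))
  have ht₃ := pow_le_pow_left₀ ht₁ ht.1 3
  have ht₃' := pow_le_pow_left₀ hθ₀ ht.2 3
  have ht₅ := pow_le_pow_left₀ hθ₀ ht.2 5
  have hsin₁ := sin_ge_sub_cube hθ₀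
  have hsin₂ := sin_le_sub_cube_add_pow_five hθ₀
  rw [aseq]
  constructor <;> linarith

/-- The first region Hansen removed has area about `3.7507·10⁻¹¹`, so his claim of
`4·10⁻¹¹` is approximately correct. -/
theorem hansen_first_region_area : 3.7507e-11 < aseq 2 ∧ aseq 2 < 3.7508e-11 := by
  have hs := sqrt_three_mem_Icc
  have hx₀ : xseq 0 ∈ Icc 0.133974595 0.1339746 := by
    rw [xseq]; constructor <;> linarith [hs.1, hs.2]
  have hx₁ := xseq_succ_mem_Icc hs hx₀ (l := 0.02413116) (u := 0.02413117)
    (by norm_num) (by norm_num) (by norm_num) (by norm_num) (by norm_num)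
  have hx₂ := xseq_succ_mem_Icc hs hx₁ (l := 0.0006080990) (u := 0.0006080996)
    (by norm_num) (by norm_num) (by norm_num) (by norm_num) (by norm_num)
  have hx₃ := xseq_succ_mem_Icc hs hx₂ (l := 3.701744e-7) (u := 3.701752e-7)
    (by norm_num) (by norm_num) (by norm_num) (by norm_num) (by norm_num)
  have hθ := θseq_mem_Icc hx₃ (t₁ := 0.0006084195) (t₂ := 0.0006084203)
    (by norm_num) (by norm_num) (by norm_num)
  have ha := aseq_mem_Icc hx₂ hx₃ hθ (by norm_num) (by norm_num) (by norm_num)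
  constructor
  · exact lt_of_lt_of_le (by norm_num) ha.1
  · exact lt_of_le_of_lt ha.2 (by norm_num)
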